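/- Every g ∈ Γ satisfying gω = ω acts as the identity on T_K, i.e. g(x) = x for all x ∈ T_K. -/

import Mathlib

/-!
Every row `r` of `g - 1` has entries in `K` and satisfies `r ⬝ᵥ ω = 0`, because `g ω = ω`.
Complex conjugation preserves `K = ℚ(√D)` (it sends `√D` to `-√D` as `D < 0`), and `H` is
invertible with entries in `K`, so `s = H⁻¹ r̄` lies in `K^{n+1}`; as `H` is hermitian,
`h(s, ω)` is conjugate to `r ⬝ᵥ ω = 0`, i.e. `s ∈ S_K`. Hence for `x ∈ T_K` we get
`0 = h(x, s) = r ⬝ᵥ x`, so `(g - 1) x = 0`.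
-/

open Matrix Complex
open scoped ComplexConjugate IntermediateField

section SubfieldEntries

variable {k : Type*} [Field k] {ι : Type*} [Fintype ι] (K : Subfield k)

theorem Matrix.inv_apply_mem_of_forall_apply_mem [DecidableEq ι] {M : Matrix ι ι k}
    (hM : ∀ i j, M i j ∈ K) (i j : ι) : M⁻¹ i j ∈ K := by
  by_cases hdet : IsUnit M.det
  swap
  · rw [nonsing_inv_apply_not_isUnit M hdet]
    exact K.zero_mem
  let M₀ : Matrix ι ι K := Matrix.of fun i j => ⟨M i j, hM i j⟩
  have hM₀ : M₀.map K.subtype = M := rfl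
  have hdet₀ : IsUnit M₀.det := by
    rwa [← hM₀, ← RingHom.mapMatrix_apply, ← RingHom.map_det, isUnit_map_iff] at hdet
  have hinv : M⁻¹ = M₀⁻¹.map K.subtype := by
    refine inv_eq_left_inv ?_
    rw [← hM₀, ← Matrix.map_mul, nonsing_inv_mul M₀ hdet₀,
      Matrix.map_one _ (map_zero _) (map_one _)]
  rw [hinv]
  exact (M₀⁻¹ i j).2

theorem Matrix.mulVec_apply_mem {M : Matrix ι ι k} (hM : ∀ i j, M i j ∈ K) {v : ι → k}
    (hv : ∀ i, v i ∈ K) (i : ι) : (M *ᵥ v) i ∈ K :=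
  K.sum_mem fun j _ => K.mul_mem (hM i j) (hv j)

end SubfieldEntries

theorem Complex.conj_eq_neg_of_sq_eq_neg {z : ℂ} {d : ℝ} (hd : d < 0) (hz : z ^ 2 = d) :
    conj z = -z := by
  have hre : z.re ^ 2 - z.im ^ 2 = d := by simpa [sq] using congrArg re hz
  have him : z.re * z.im = 0 := by simpa [sq, mul_comm] using congrArg im hz
  have hre0 : z.re = 0 := by
    rcases mul_eq_zero.mp him with h | h
    · exact h
    · nlinarith [sq_nonneg z.re]
  apply Complex.ext <;> simp [hre0]

theorem IntermediateField.map_adjoin_simple_le {F E : Type*} [Field F] [Field E] [Algebra F E]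
    (σ : E →ₐ[F] E) {α : E} (hσα : σ α ∈ F⟮α⟯) : F⟮α⟯.map σ ≤ F⟮α⟯ := by
  rw [adjoin_map, Set.image_singleton, adjoin_simple_le_iff]
  exact hσα

theorem Complex.conj_mem_adjoin_simple_of_conj_eq_neg {δ : ℂ} (hδ : conj δ = -δ) {z : ℂ}
    (hz : z ∈ ℚ⟮δ⟯) : conj z ∈ ℚ⟮δ⟯ := by
  have hσδ : (starRingEnd ℂ).toRatAlgHom δ ∈ ℚ⟮δ⟯ := by
    rw [RingHom.toRatAlgHom_apply, hδ]
    exact neg_mem (IntermediateField.mem_adjoin_simple_self ℚ δ)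
  exact IntermediateField.map_adjoin_simple_le _ hσδ ⟨z, hz, rfl⟩

theorem Matrix.isUnit_det_of_isUnit_det_mul_mul {R : Type*} [CommRing R] {ι : Type*}
    [Fintype ι] [DecidableEq ι] {A H B : Matrix ι ι R} (h : IsUnit (A * H * B).det) :
    IsUnit H.det := by
  rw [det_mul, det_mul] at h
  exact isUnit_of_mul_isUnit_right (isUnit_of_mul_isUnit_left h)

theorem Matrix.mulVec_eq_zero_of_forall_orthogonal {k : Type*} [Field k] [StarRing k]
    {ι : Type*} [Fintype ι] [DecidableEq ι] (K : Subfield k)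
    (hK : ∀ z ∈ K, star z ∈ K) {H : Matrix ι ι k} (hH : H.IsHermitian) (hHdet : IsUnit H.det)
    (hHK : ∀ i j, H i j ∈ K) {ω x : ι → k}
    (hx : ∀ s : ι → k, (∀ i, s i ∈ K) → star ω ⬝ᵥ H *ᵥ s = 0 → star s ⬝ᵥ H *ᵥ x = 0)
    {A : Matrix ι ι k} (hAK : ∀ i j, A i j ∈ K) (hAω : A *ᵥ ω = 0) : A *ᵥ x = 0 := by
  funext i
  let s := H⁻¹ *ᵥ star (A i)
  have hHs : H *ᵥ s = star (A i) := by
    rw [mulVec_mulVec, mul_nonsing_inv H hHdet, one_mulVec]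
  have hs : star s = A i ᵥ* H⁻¹ := by
    rw [star_mulVec, star_star, hH.inv.eq]
  have hsK : ∀ j, s j ∈ K :=
    mulVec_apply_mem K (inv_apply_mem_of_forall_apply_mem K hHK) fun j => hK _ (hAK i j)
  have hωs : star ω ⬝ᵥ H *ᵥ s = 0 := by
    have hrow : A i ⬝ᵥ ω = 0 := congrFun hAω i
    rw [hHs, star_dotProduct_star, hrow, star_zero]
  have hsx := hx s hsK hωs
  rwa [hs, dotProduct_mulVec, vecMul_vecMul, nonsing_inv_mul H hHdet, vecMul_one] at hsx

theorem stmt1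
    (n : ℕ)
    (D : ℤ) (hD : D < 0)
    (δ : ℂ) (hδ : δ ^ 2 = (D : ℂ))
    (K : IntermediateField ℚ ℂ) (hK : K = IntermediateField.adjoin ℚ {δ})
    (H : Matrix (Fin (n + 1)) (Fin (n + 1)) ℂ)
    (hHK : ∀ i j, H i j ∈ K ∧ IsIntegral ℤ (H i j))
    (hHherm : H.IsHermitian)
    (hsig : ∃ P : Matrix (Fin (n + 1)) (Fin (n + 1)) ℂ, IsUnit P.det ∧
      Pᴴ * H * P = Matrix.diagonal (fun i => if i = Fin.last n then (-1 : ℂ) else 1))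
    (UΛ : Subgroup (GL (Fin (n + 1)) ℂ))
    (hUΛ : ∀ g : GL (Fin (n + 1)) ℂ, g ∈ UΛ ↔
      ((∀ i j, (g : Matrix (Fin (n + 1)) (Fin (n + 1)) ℂ) i j ∈ K ∧
          IsIntegral ℤ ((g : Matrix (Fin (n + 1)) (Fin (n + 1)) ℂ) i j)) ∧
       (∀ i j, ((g⁻¹ : GL (Fin (n + 1)) ℂ) : Matrix (Fin (n + 1)) (Fin (n + 1)) ℂ) i j ∈ K ∧
          IsIntegral ℤ (((g⁻¹ : GL (Fin (n + 1)) ℂ) : Matrix (Fin (n + 1)) (Fin (n + 1)) ℂ) i j)) ∧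
       (g : Matrix (Fin (n + 1)) (Fin (n + 1)) ℂ)ᴴ * H *
          (g : Matrix (Fin (n + 1)) (Fin (n + 1)) ℂ) = H))
    (Γ : Subgroup (GL (Fin (n + 1)) ℂ)) (hΓ : Γ ≤ UΛ)
    (ω : Fin (n + 1) → ℂ)
    (g : GL (Fin (n + 1)) ℂ) (hgΓ : g ∈ Γ)
    (hgω : (g : Matrix (Fin (n + 1)) (Fin (n + 1)) ℂ).mulVec ω = ω) :
    ∀ x : Fin (n + 1) → ℂ, (∀ i, x i ∈ K) →
      (∀ s : Fin (n + 1) → ℂ, (∀ i, s i ∈ K) → star ω ⬝ᵥ H.mulVec s = 0 →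
        star s ⬝ᵥ H.mulVec x = 0) →
      (g : Matrix (Fin (n + 1)) (Fin (n + 1)) ℂ).mulVec x = x := by
  intro x _ hxT
  have hδconj : conj δ = -δ :=
    conj_eq_neg_of_sq_eq_neg (d := D) (by exact_mod_cast hD) (by simpa using hδ)
  have hKconj : ∀ z ∈ K.toSubfield, star z ∈ K.toSubfield := by
    subst hK
    exact fun z hz => conj_mem_adjoin_simple_of_conj_eq_neg hδconj hz
  have hHdet : IsUnit H.det := by
    obtain ⟨P, -, hPH⟩ := hsig
    refine isUnit_det_of_isUnit_det_mul_mul (A := Pᴴ) (B := P) ?_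
    rw [hPH, det_diagonal, isUnit_iff_ne_zero, Finset.prod_ne_zero_iff]
    intro i _
    split_ifs <;> norm_num
  have hgK := ((hUΛ g).mp (hΓ hgΓ)).1
  have hg1K : ∀ i j, ((g : Matrix (Fin (n + 1)) (Fin (n + 1)) ℂ) - 1) i j ∈ K := by
    intro i j
    refine K.sub_mem (hgK i j).1 ?_
    by_cases hij : i = j <;> simp [one_apply, hij, K.one_mem, K.zero_mem]
  have hfix := mulVec_eq_zero_of_forall_orthogonal K.toSubfield hKconj hHherm hHdet
    (fun i j => (hHK i j).1) hxT hg1K (by rw [sub_mulVec, hgω, one_mulVec, sub_self])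
  rwa [sub_mulVec, one_mulVec, sub_eq_zero] at hfix
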